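/- Let V : ℝ × ℝⁿ → ℝ be smooth, and let φ : [0,T] × ℝⁿ → ℝ and a : [0,T] × ℝⁿ → ℂ be smooth functions satisfying ∂_t φ + (1/2)|∇φ|² + V + |a|² = 0 with φ(0,·) = φ₀, and ∂_t a + ∇φ·∇a + (1/2) a Δφ = 0 with a(0,·) = a₀. Then the pair (ρ, v) := (|a|², ∇φ) solves the compressible Euler system with potential: ∂_t v + (v·∇)v + ∇V + ∇ρ = 0 with v(0,·) = ∇φ₀, and ∂_t ρ + ∇·(ρ v) = 0 with ρ(0,·) = |a₀|². -/

import Mathlib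

open MeasureTheory Filter Topology Complex Function
open scoped Topology ENNReal FourierTransform

noncomputable section

/-- Euclidean space `ℝⁿ`. -/
abbrev Eucl (n : ℕ) := EuclideanSpace ℝ (Fin n)

/-- Partial derivative `∂f/∂x_j` in the `j`-th coordinate direction. -/
def pdv {n : ℕ} {F : Type*} [NormedAddCommGroup F] [NormedSpace ℝ F]
    (j : Fin n) (f : Eucl n → F) (x : Eucl n) : F :=
  fderiv ℝ f x (EuclideanSpace.single j 1)

/-- Laplacian `Δf = Σ_j ∂²f/∂x_j²`. -/
def lap {n : ℕ} {F : Type*} [NormedAddCommGroup F] [NormedSpace ℝ F]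
    (f : Eucl n → F) (x : Eucl n) : F :=
  ∑ j, pdv j (pdv j f) x

/-- The `H^k(ℝⁿ)` Sobolev norm (with values in `ℝ≥0∞`) for `k ∈ ℕ`:
`‖f‖_{H^k} = (Σ_{i ≤ k} ∫ ‖D^i f(x)‖² dx)^{1/2}`. -/
def hk {n : ℕ} {F : Type*} [NormedAddCommGroup F] [NormedSpace ℝ F]
    (k : ℕ) (f : Eucl n → F) : ℝ≥0∞ :=
  (∑ i ∈ Finset.range (k + 1),
      ∫⁻ x : Eucl n, (‖iteratedFDeriv ℝ i f x‖₊ : ℝ≥0∞) ^ 2) ^ (1 / 2 : ℝ)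

/-- The `H^σ(ℝⁿ)` Sobolev norm for a real exponent `σ`, via the Fourier transform:
`‖f‖_{H^σ} = (∫ (1+|ξ|²)^σ |f̂(ξ)|² dξ)^{1/2}`. -/
def hs {n : ℕ} (σ : ℝ) (f : Eucl n → ℂ) : ℝ :=
  (∫ ξ : Eucl n, (1 + ‖ξ‖ ^ 2) ^ σ * ‖𝓕 f ξ‖ ^ 2) ^ (1 / 2 : ℝ)

open scoped RealInnerProductSpace

section Helpers
open ContinuousLinearMap
variable {E F : Type*} [NormedAddCommGroup E] [NormedSpace ℝ E]
  [NormedAddCommGroup F] [NormedSpace ℝ F]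

theorem fderiv_smooth' {f : E → F} (hf : ContDiff ℝ (⊤ : ℕ∞) f) :
    ContDiff ℝ (⊤ : ℕ∞) (fderiv ℝ f) :=
  hf.fderiv_right (m := (⊤ : ℕ∞)) (by simp)

theorem fderiv_apply_comm' {f : E → F} (hf : ContDiff ℝ (⊤ : ℕ∞) f) (p u w : E) :
    fderiv ℝ (fun q => fderiv ℝ f q u) p w = fderiv ℝ (fderiv ℝ f) p w u := by
  have hΨ : Differentiable ℝ (fderiv ℝ f) := (fderiv_smooth' hf).differentiable (by simp)
  have h := ((ContinuousLinearMap.apply ℝ F u).hasFDerivAt.comp p (hΨ p).hasFDerivAt)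
  have h2 : HasFDerivAt (fun q => fderiv ℝ f q u)
      (((ContinuousLinearMap.apply ℝ F u)).comp (fderiv ℝ (fderiv ℝ f) p)) p := h
  rw [h2.fderiv]; rfl

theorem second_symm' {f : E → F} (hf : ContDiff ℝ (⊤ : ℕ∞) f) (p u w : E) :
    fderiv ℝ (fderiv ℝ f) p u w = fderiv ℝ (fderiv ℝ f) p w u :=
  second_derivative_symmetric (fun y => ((hf.differentiable (by simp)) y).hasFDerivAt)
    (((fderiv_smooth' hf).differentiable (by simp) p).hasFDerivAt) u w

theorem fderiv_apply_smooth' {f : E → F} (hf : ContDiff ℝ (⊤ : ℕ∞) f) (u : E) :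
    ContDiff ℝ (⊤ : ℕ∞) (fun p => fderiv ℝ f p u) :=
  (ContinuousLinearMap.apply ℝ F u).contDiff.comp (fderiv_smooth' hf)

theorem contDiff_slice {f : ℝ × E → F} (hf : ContDiff ℝ (⊤ : ℕ∞) f) (t : ℝ) :
    ContDiff ℝ (⊤ : ℕ∞) (fun y => f (t, y)) := hf.comp (contDiff_const.prodMk contDiff_id)

theorem contDiff_curve {f : ℝ × E → F} (hf : ContDiff ℝ (⊤ : ℕ∞) f) (x : E) :
    ContDiff ℝ (⊤ : ℕ∞) (fun τ => f (τ, x)) := hf.comp (contDiff_id.prodMk contDiff_const)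

theorem sliceX {f : ℝ × E → F} (hf : ContDiff ℝ (⊤ : ℕ∞) f) (t : ℝ) (x : E) (e : E) :
    fderiv ℝ (fun y => f (t, y)) x e = fderiv ℝ f (t, x) (0, e) := by
  have h : HasFDerivAt (fun y => f (t, y))
      ((fderiv ℝ f (t, x)).comp (inr ℝ ℝ E)) x :=
    ((hf.differentiable (by simp) (t, x)).hasFDerivAt.comp x (hasFDerivAt_prodMk_right t x))
  rw [h.fderiv]; simp

theorem sliceT {f : ℝ × E → F} (hf : ContDiff ℝ (⊤ : ℕ∞) f) (t : ℝ) (x : E) :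
    deriv (fun τ => f (τ, x)) t = fderiv ℝ f (t, x) (1, 0) := by
  have h : HasDerivAt (fun τ => f (τ, x)) (fderiv ℝ f (t, x) (1, 0)) t :=
    (hf.differentiable (by simp) (t, x)).hasFDerivAt.comp_hasDerivAt t
      ((hasDerivAt_id t).prodMk (hasDerivAt_const t x))
  exact h.deriv

theorem pdv2_joint {f : ℝ × E → F} (hf : ContDiff ℝ (⊤ : ℕ∞) f) (t : ℝ) (x : E) (u : ℝ × E) (e : E) :
    fderiv ℝ (fun y => fderiv ℝ f (t, y) u) x e
      = fderiv ℝ (fderiv ℝ f) (t, x) (0, e) u := by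
  rw [sliceX (fderiv_apply_smooth' hf u) t x e]
  exact fderiv_apply_comm' hf (t, x) u (0, e)

theorem deriv_fderiv_joint {f : ℝ × E → F} (hf : ContDiff ℝ (⊤ : ℕ∞) f) (t : ℝ) (x : E) (u : ℝ × E) :
    deriv (fun τ => fderiv ℝ f (τ, x) u) t = fderiv ℝ (fderiv ℝ f) (t, x) (1, 0) u := by
  rw [sliceT (fderiv_apply_smooth' hf u) t x]
  exact fderiv_apply_comm' hf (t, x) u (1, 0)

end Helpers

open scoped RealInnerProductSpace

/-- **From the WKB system to the compressible Euler equation.** If `(φ, a)` solves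
`∂_t φ + ½|∇φ|² + V + |a|² = 0`, `∂_t a + ∇φ·∇a + ½ a Δφ = 0`, then
`(ρ, v) = (|a|², ∇φ)` solves the compressible Euler system
`∂_t v + (v·∇)v + ∇V + ∇ρ = 0`, `∂_t ρ + ∇·(ρ v) = 0`, with data `(|a₀|², ∇φ₀)`. -/
theorem wkb_to_euler
    (n : ℕ) (T : ℝ) (hT : 0 < T)
    (V : ℝ → Eucl n → ℝ) (φ : ℝ → Eucl n → ℝ) (a : ℝ → Eucl n → ℂ)
    (φ₀ : Eucl n → ℝ) (a₀ : Eucl n → ℂ)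
    (hV : ContDiff ℝ (⊤ : ℕ∞) fun p : ℝ × Eucl n => V p.1 p.2)
    (hφ : ContDiff ℝ (⊤ : ℕ∞) fun p : ℝ × Eucl n => φ p.1 p.2)
    (ha : ContDiff ℝ (⊤ : ℕ∞) fun p : ℝ × Eucl n => a p.1 p.2)
    (hφ0 : ∀ x, φ 0 x = φ₀ x) (ha0 : ∀ x, a 0 x = a₀ x)
    -- `∂_t φ + ½|∇φ|² + V + |a|² = 0` on `[0,T] × ℝⁿ`
    (heq1 : ∀ t ∈ Set.Icc (0 : ℝ) T, ∀ x : Eucl n,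
      deriv (fun τ => φ τ x) t + (1 / 2) * ∑ j, (pdv j (φ t) x) ^ 2
        + V t x + ‖a t x‖ ^ 2 = 0)
    -- `∂_t a + ∇φ·∇a + ½ a Δφ = 0` on `[0,T] × ℝⁿ`
    (heq2 : ∀ t ∈ Set.Icc (0 : ℝ) T, ∀ x : Eucl n,
      deriv (fun τ => a τ x) t + ∑ j, ((pdv j (φ t) x : ℝ) : ℂ) * pdv j (a t) x
        + (1 / 2 : ℂ) * ((lap (φ t) x : ℝ) : ℂ) * a t x = 0) :
    -- with `ρ := |a|²` and `v_i := ∂_i φ`: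
    (∀ t ∈ Set.Icc (0 : ℝ) T, ∀ x : Eucl n,
      -- `∂_t v + (v·∇)v + ∇V + ∇ρ = 0` (componentwise)
      (∀ i : Fin n,
        deriv (fun τ => pdv i (φ τ) x) t
          + (∑ j, pdv j (φ t) x * pdv j (fun z => pdv i (φ t) z) x)
          + pdv i (V t) x + pdv i (fun z => ‖a t z‖ ^ 2) x = 0) ∧
      -- `∂_t ρ + ∇·(ρ v) = 0`
      deriv (fun τ => ‖a τ x‖ ^ 2) t
        + ∑ j, pdv j (fun z => ‖a t z‖ ^ 2 * pdv j (φ t) z) x = 0) ∧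
    -- initial conditions `v(0,·) = ∇φ₀`, `ρ(0,·) = |a₀|²`
    (∀ x : Eucl n, (∀ i : Fin n, pdv i (φ 0) x = pdv i φ₀ x) ∧
      ‖a 0 x‖ ^ 2 = ‖a₀ x‖ ^ 2) := by
  set Φ : ℝ × Eucl n → ℝ := fun p => φ p.1 p.2 with hΦdef
  have hpdv : ∀ (s : ℝ) (y : Eucl n) (j : Fin n),
      pdv j (φ s) y = fderiv ℝ Φ (s, y) (0, EuclideanSpace.single j 1) :=
    fun s y j => sliceX hφ s y _
  refine ⟨fun t ht x => ⟨fun i => ?_, ?_⟩, fun x => ⟨fun i => ?_, ?_⟩⟩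
  · -- Euler equation for v
    set S := fderiv ℝ (fderiv ℝ Φ) (t, x) with hSdef
    set ei : Eucl n := EuclideanSpace.single i 1 with heidef
    -- rewrite of the four summands
    have hArw : (fun y : Eucl n => deriv (fun τ => φ τ y) t)
        = fun y => fderiv ℝ Φ (t, y) (1, 0) := funext fun y => sliceT hφ t y
    have hBrw : (fun y : Eucl n => 1 / 2 * ∑ j, (pdv j (φ t) y) ^ 2)
        = fun y => 1 / 2 * ∑ j, (fderiv ℝ Φ (t, y) (0, EuclideanSpace.single j 1)) *
            (fderiv ℝ Φ (t, y) (0, EuclideanSpace.single j 1)) := by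
      funext y; rw [Finset.sum_congr rfl fun j _ => by rw [hpdv t y j, sq]]
    -- differentiability of the four summands
    have hsmA : ContDiff ℝ (⊤ : ℕ∞) (fun y : Eucl n => fderiv ℝ Φ (t, y) ((1 : ℝ), (0 : Eucl n))) :=
      contDiff_slice (fderiv_apply_smooth' hφ _) t
    have hsmP : ∀ j : Fin n, ContDiff ℝ (⊤ : ℕ∞)
        (fun y : Eucl n => fderiv ℝ Φ (t, y) (0, EuclideanSpace.single j 1)) :=
      fun j => contDiff_slice (fderiv_apply_smooth' hφ _) t
    have hA_d : DifferentiableAt ℝ (fun y : Eucl n => deriv (fun τ => φ τ y) t) x := by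
      rw [hArw]; exact (hsmA.differentiable (by simp)).differentiableAt
    have hB_d : DifferentiableAt ℝ (fun y : Eucl n => 1 / 2 * ∑ j, (pdv j (φ t) y) ^ 2) x := by
      rw [hBrw]
      exact ((contDiff_const.mul (ContDiff.sum fun j _ =>
        (hsmP j).mul (hsmP j))).differentiable (by simp)).differentiableAt
    have hC_d : DifferentiableAt ℝ (fun y : Eucl n => V t y) x :=
      ((contDiff_slice hV t).differentiable (by simp)).differentiableAt
    have hD_d : DifferentiableAt ℝ (fun y : Eucl n => ‖a t y‖ ^ 2) x :=
      (((contDiff_slice ha t).norm_sq ℝ).differentiable (by simp)).differentiableAt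
    -- the zero function
    have hzero : (fun y : Eucl n => deriv (fun τ => φ τ y) t
        + 1 / 2 * ∑ j, (pdv j (φ t) y) ^ 2 + V t y + ‖a t y‖ ^ 2) = fun _ => (0 : ℝ) :=
      funext fun y => heq1 t ht y
    have hDzero : (0 : ℝ)
        = fderiv ℝ (fun y : Eucl n => deriv (fun τ => φ τ y) t
            + 1 / 2 * ∑ j, (pdv j (φ t) y) ^ 2 + V t y + ‖a t y‖ ^ 2) x ei := by
      rw [hzero]; simp
    rw [fderiv_fun_add ((hA_d.fun_add hB_d).fun_add hC_d) hD_d,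
        fderiv_fun_add (hA_d.fun_add hB_d) hC_d, fderiv_fun_add hA_d hB_d] at hDzero
    simp only [ContinuousLinearMap.add_apply] at hDzero
    -- values of the four directional derivatives
    have hAval : fderiv ℝ (fun y : Eucl n => deriv (fun τ => φ τ y) t) x ei
        = S (1, 0) (0, ei) := by
      rw [hArw, pdv2_joint hφ t x _ ei, ← hSdef, second_symm' hφ (t, x)]
    have hBval : fderiv ℝ (fun y : Eucl n => 1 / 2 * ∑ j, (pdv j (φ t) y) ^ 2) x ei
        = ∑ j, pdv j (φ t) x * S (0, EuclideanSpace.single j 1) (0, ei) := by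
      rw [hBrw]
      have hj : ∀ j : Fin n, HasFDerivAt
          (fun y : Eucl n => fderiv ℝ Φ (t, y) (0, EuclideanSpace.single j 1))
          (fderiv ℝ (fun y : Eucl n => fderiv ℝ Φ (t, y) (0, EuclideanSpace.single j 1)) x) x :=
        fun j => (((hsmP j).differentiable (by simp)).differentiableAt).hasFDerivAt
      have hmul := fun j : Fin n => (hj j).mul (hj j)
      have hsum := HasFDerivAt.fun_sum (fun j (_ : j ∈ Finset.univ) => hmul j)
      have hfin : HasFDerivAt (fun y : Eucl n => 1 / 2 * ∑ j, fderiv ℝ Φ (t, y) (0, EuclideanSpace.single j 1) *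
          fderiv ℝ Φ (t, y) (0, EuclideanSpace.single j 1)) _ x := hsum.const_mul (1 / 2 : ℝ)
      rw [hfin.fderiv]
      simp only [ContinuousLinearMap.smul_apply, ContinuousLinearMap.sum_apply,
        ContinuousLinearMap.add_apply, smul_eq_mul, Finset.mul_sum]
      rw [Finset.sum_congr rfl fun j _ => ?_]
      rw [pdv2_joint hφ t x _ ei, ← hSdef, second_symm' hφ (t, x), ← hpdv t x j]
      ring
    have hgoal1 : deriv (fun τ => pdv i (φ τ) x) t = S (1, 0) (0, ei) := by
      have : (fun τ => pdv i (φ τ) x) = fun τ => fderiv ℝ Φ (τ, x) (0, ei) :=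
        funext fun τ => hpdv τ x i
      rw [this, deriv_fderiv_joint hφ t x _]
    have hgoalB : ∀ j : Fin n, pdv j (fun z => pdv i (φ t) z) x
        = S (0, EuclideanSpace.single j 1) (0, ei) := by
      intro j
      have hrw : (fun z : Eucl n => pdv i (φ t) z) = fun z => fderiv ℝ Φ (t, z) (0, ei) :=
        funext fun z => hpdv t z i
      show fderiv ℝ (fun z : Eucl n => pdv i (φ t) z) x (EuclideanSpace.single j 1) = _
      rw [hrw, pdv2_joint hφ t x _ _]
    have hCval : fderiv ℝ (fun y : Eucl n => V t y) x ei = pdv i (V t) x := rfl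
    have hDval : fderiv ℝ (fun y : Eucl n => ‖a t y‖ ^ 2) x ei
        = pdv i (fun z => ‖a t z‖ ^ 2) x := rfl
    rw [hAval, hBval, hCval, hDval] at hDzero
    rw [hgoal1, Finset.sum_congr rfl fun j _ => by rw [hgoalB j]]
    linarith
  · -- continuity equation for ρ
    have hax : HasDerivAt (fun τ => a τ x) (deriv (fun τ => a τ x) t) t :=
      (((contDiff_curve ha x).differentiable (by simp)).differentiableAt).hasDerivAt
    set c := a t x with hcdef
    set a' := deriv (fun τ => a τ x) t with ha'def
    have hderiv_rho : deriv (fun τ => ‖a τ x‖ ^ 2) t = 2 * ⟪c, a'⟫ :=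
      (hax.norm_sq).deriv
    -- per-j product rule
    have hat_d : HasFDerivAt (fun z => a t z) (fderiv ℝ (a t) x) x :=
      (((contDiff_slice ha t).differentiable (by simp)).differentiableAt).hasFDerivAt
    have hrho := hat_d.norm_sq
    have hv_d : ∀ j : Fin n, HasFDerivAt (fun z => pdv j (φ t) z)
        (fderiv ℝ (pdv j (φ t)) x) x := by
      intro j
      have hrw : (fun z : Eucl n => pdv j (φ t) z)
          = fun z => fderiv ℝ Φ (t, z) (0, EuclideanSpace.single j 1) :=
        funext fun z => hpdv t z j
      have : DifferentiableAt ℝ (pdv j (φ t)) x := by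
        rw [show pdv j (φ t) = fun z => fderiv ℝ Φ (t, z) (0, EuclideanSpace.single j 1)
          from hrw]
        exact ((contDiff_slice (fderiv_apply_smooth' hφ _) t).differentiable
          (by simp)).differentiableAt
      exact this.hasFDerivAt
    have hdiv : ∀ j : Fin n, pdv j (fun z => ‖a t z‖ ^ 2 * pdv j (φ t) z) x
        = ‖c‖ ^ 2 * pdv j (pdv j (φ t)) x
          + pdv j (φ t) x * (2 * ⟪c, pdv j (a t) x⟫) := by
      intro j
      have hprod : HasFDerivAt (fun z => ‖a t z‖ ^ 2 * pdv j (φ t) z) _ x := hrho.mul (hv_d j)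
      show fderiv ℝ (fun z => ‖a t z‖ ^ 2 * pdv j (φ t) z) x (EuclideanSpace.single j 1) = _
      rw [hprod.fderiv]
      simp only [ContinuousLinearMap.add_apply, ContinuousLinearMap.smul_apply,
        ContinuousLinearMap.comp_apply, smul_eq_mul, ContinuousLinearMap.coe_smul',
        Pi.smul_apply, innerSL_apply_apply, nsmul_eq_mul, Nat.cast_ofNat]
      rfl
    -- use heq2
    have h2 := heq2 t ht x
    have ha'eq : a' = -(∑ j, ((pdv j (φ t) x : ℝ) : ℂ) * pdv j (a t) x)
        - (1 / 2 : ℂ) * ((lap (φ t) x : ℝ) : ℂ) * c := by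
      rw [ha'def, hcdef]; linear_combination h2
    have hinner : ⟪c, a'⟫ = -(∑ j, pdv j (φ t) x * ⟪c, pdv j (a t) x⟫)
        - 1 / 2 * lap (φ t) x * ‖c‖ ^ 2 := by
      rw [ha'eq, inner_sub_right, inner_neg_right, inner_sum]
      congr 1
      · congr 1
        refine Finset.sum_congr rfl fun j _ => ?_
        rw [← Complex.real_smul, real_inner_smul_right]
      · have hh : (1 / 2 : ℂ) * ((lap (φ t) x : ℝ) : ℂ) * c
            = ((1 / 2 * lap (φ t) x : ℝ)) • c := by
          rw [Complex.real_smul]; push_cast; ring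
        rw [hh, real_inner_smul_right, real_inner_self_eq_norm_sq]
    have hlap : lap (φ t) x = ∑ j, pdv j (pdv j (φ t)) x := rfl
    rw [hderiv_rho, Finset.sum_congr rfl fun j _ => hdiv j, hinner, hlap,
      Finset.sum_add_distrib, ← Finset.mul_sum]
    have hs : ∑ j, pdv j (φ t) x * (2 * ⟪c, pdv j (a t) x⟫)
        = 2 * ∑ j, pdv j (φ t) x * ⟪c, pdv j (a t) x⟫ := by
      rw [Finset.mul_sum]; exact Finset.sum_congr rfl fun j _ => by ring
    rw [hs]
    ring
  · have h0 : φ 0 = φ₀ := funext hφ0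
    rw [h0]
  · rw [ha0]
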